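/- (Equivalence of the differential inequalities for different embedding degrees.) Let Z : ℝ^(2n) → ℝ^(2n) and Γ : ℝ^(2n) → ℝ be C^∞, let ξ₁, ξ₂ > 0, and for j = 1, 2 define S_j(z, w) = (w^(ξ_j+1)·Z(w⁻¹·z), 0) and Γ̃(z, w) = Γ(w⁻¹·z) on ℝ^(2n) × (0, ∞). Fix p ≥ 1 and coefficients χ₀, …, χ_{p−1} ∈ ℝ. Given Ω₁ ⊆ ℝ^(2n) × (0, ∞), define Ω₂ = {(z, w) : w > 0 and (w^(ξ₂/ξ₁ − 1)·z, w^(ξ₂/ξ₁)) ∈ Ω₁}. Then the inequality L_{S₁}^p Γ̃(z, w) ≤ Σ_{i=0}^{p−1} χ_i·L_{S₁}^i Γ̃(z, w) holds for all (z, w) ∈ Ω₁ if and only if the inequality L_{S₂}^p Γ̃(z, w) ≤ Σ_{i=0}^{p−1} χ_i·L_{S₂}^i Γ̃(z, w) holds for all (z, w) ∈ Ω₂. -/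

import Mathlib

/-- The Lie derivative of `g` along the vector field `X`: `L_X g (y) = Dg(y) (X y)`. -/
noncomputable def lieDeriv {E : Type*} [NormedAddCommGroup E] [NormedSpace ℝ E]
    (X : E → E) (g : E → ℝ) : E → ℝ :=
  fun y => fderiv ℝ g y (X y)

/-- Iterated Lie derivatives: `L_X^0 g = g`, `L_X^(k+1) g = L_X (L_X^k g)`. -/
noncomputable def lieDerivIter {E : Type*} [NormedAddCommGroup E] [NormedSpace ℝ E]
    (X : E → E) (g : E → ℝ) : ℕ → E → ℝ
  | 0 => g
  | k + 1 => lieDeriv X (lieDerivIter X g k)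

lemma contDiff_lieDerivIter {E : Type*} [NormedAddCommGroup E] [NormedSpace ℝ E]
    {X : E → E} {g : E → ℝ} (hX : ContDiff ℝ (⊤ : ℕ∞) X) (hg : ContDiff ℝ (⊤ : ℕ∞) g) (k : ℕ) :
    ContDiff ℝ (⊤ : ℕ∞) (lieDerivIter X g k) := by
  induction k with
  | zero => exact hg
  | succ k ih => exact ContDiff.clm_apply (ih.fderiv_right (by simp)) hX

variable {E : Type*} [NormedAddCommGroup E] [NormedSpace ℝ E]

lemma lieDerivIter_homog {Z : E → E} {Γ : E → ℝ}
    (hZ : ContDiff ℝ (⊤ : ℕ∞) Z) (hΓ : ContDiff ℝ (⊤ : ℕ∞) Γ) (ξ : ℝ)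
    {S : E × ℝ → E × ℝ}
    (hS : ∀ (z : E) (w : ℝ), S (z, w) = (w ^ (ξ + 1) • Z (w⁻¹ • z), (0 : ℝ)))
    {Γt : E × ℝ → ℝ} (hΓt : ∀ (z : E) (w : ℝ), Γt (z, w) = Γ (w⁻¹ • z))
    (k : ℕ) :
    ∀ (z : E) (w : ℝ), 0 < w →
      lieDerivIter S Γt k (z, w) = w ^ ((k : ℝ) * ξ) * lieDerivIter Z Γ k (w⁻¹ • z) := by
  induction k with
  | zero =>
    intro z w hw
    simp [lieDerivIter, hΓt z w]
  | succ k ih =>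
    intro z w hw
    set g : E → ℝ := lieDerivIter Z Γ k with hg
    have hgk : ContDiff ℝ (⊤ : ℕ∞) g := contDiff_lieDerivIter hZ hΓ k
    set F : E × ℝ → ℝ := fun q => q.2 ^ ((k : ℝ) * ξ) * g (q.2⁻¹ • q.1) with hF
    -- eventual equality near (z, w)
    have hopen : IsOpen {q : E × ℝ | 0 < q.2} := isOpen_lt continuous_const continuous_snd
    have heq : lieDerivIter S Γt k =ᶠ[nhds (z, w)] F := by
      filter_upwards [hopen.mem_nhds (by exact hw : (z, w) ∈ {q : E × ℝ | 0 < q.2})] with q hq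
      have := ih q.1 q.2 hq
      simpa using this
    -- differentiability of F at (z, w)
    have hw' : w ≠ 0 := ne_of_gt hw
    have hA : DifferentiableAt ℝ (fun q : E × ℝ => q.2 ^ ((k : ℝ) * ξ)) (z, w) := by
      exact differentiableAt_snd.rpow_const (Or.inl hw')
    have hB : DifferentiableAt ℝ (fun q : E × ℝ => q.2⁻¹ • q.1) (z, w) :=
      (differentiableAt_snd.inv hw').smul differentiableAt_fst
    have hgd : ∀ x : E, DifferentiableAt ℝ g x := fun x =>
      (hgk.differentiable (by simp)).differentiableAt
    have hFd : DifferentiableAt ℝ F (z, w) := hA.mul ((hgd _).comp (z, w) hB)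
    have hL : HasFDerivAt F (fderiv ℝ F (z, w)) (z, w) := hFd.hasFDerivAt
    -- slice map
    have hι : HasFDerivAt (fun z' : E => (z', w))
        ((ContinuousLinearMap.id ℝ E).prod 0) z :=
      HasFDerivAt.prodMk (hasFDerivAt_id z) (hasFDerivAt_const w z)
    have hcomp := hL.comp z hι
    -- compute fderiv of the slice G z' = w^(kξ) * g (w⁻¹ • z')
    have hlin : HasFDerivAt (fun z' : E => w⁻¹ • z')
        (w⁻¹ • ContinuousLinearMap.id ℝ E) z := (hasFDerivAt_id z).const_smul w⁻¹
    have hGg : HasFDerivAt (fun z' : E => g (w⁻¹ • z'))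
        ((fderiv ℝ g (w⁻¹ • z)).comp (w⁻¹ • ContinuousLinearMap.id ℝ E)) z :=
      ((hgd _).hasFDerivAt).comp z hlin
    have hG : HasFDerivAt (fun z' : E => w ^ ((k : ℝ) * ξ) * g (w⁻¹ • z'))
        (w ^ ((k : ℝ) * ξ) • ((fderiv ℝ g (w⁻¹ • z)).comp (w⁻¹ • ContinuousLinearMap.id ℝ E)))
        z := hGg.const_mul _
    -- the two slice derivatives agree
    have hcomp' : HasFDerivAt (fun z' : E => w ^ ((k : ℝ) * ξ) * g (w⁻¹ • z'))
        ((fderiv ℝ F (z, w)).comp ((ContinuousLinearMap.id ℝ E).prod 0)) z := hcomp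
    have hsl : (fderiv ℝ F (z, w)).comp ((ContinuousLinearMap.id ℝ E).prod 0)
        = w ^ ((k : ℝ) * ξ) • ((fderiv ℝ g (w⁻¹ • z)).comp (w⁻¹ • ContinuousLinearMap.id ℝ E)) :=
      hcomp'.unique hG
    -- now compute
    have hmain : lieDerivIter S Γt (k + 1) (z, w)
        = fderiv ℝ F (z, w) (S (z, w)) := by
      show fderiv ℝ (lieDerivIter S Γt k) (z, w) (S (z, w)) = _
      rw [heq.fderiv_eq]
    rw [hmain, hS z w]
    have happ : fderiv ℝ F (z, w) (w ^ (ξ + 1) • Z (w⁻¹ • z), (0 : ℝ))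
        = (fderiv ℝ F (z, w)).comp ((ContinuousLinearMap.id ℝ E).prod 0)
            (w ^ (ξ + 1) • Z (w⁻¹ • z)) := rfl
    rw [happ, hsl]
    have hsm : w⁻¹ * w ^ (ξ + 1) = w ^ ξ := by
      rw [← Real.rpow_neg_one w, ← Real.rpow_add hw]
      norm_num
    simp only [ContinuousLinearMap.smul_apply, ContinuousLinearMap.coe_comp',
      Function.comp_apply, ContinuousLinearMap.coe_smul', Pi.smul_apply,
      ContinuousLinearMap.coe_id', id_eq, smul_eq_mul]
    rw [smul_smul, hsm, map_smul]
    have : lieDerivIter Z Γ (k + 1) (w⁻¹ • z) = fderiv ℝ g (w⁻¹ • z) (Z (w⁻¹ • z)) := rfl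
    rw [this]
    push_cast
    rw [show ((k : ℝ) + 1) * ξ = (k : ℝ) * ξ + ξ by ring, Real.rpow_add hw, smul_eq_mul]
    ring

lemma smul_rpow_inv_eq {E : Type*} [NormedAddCommGroup E] [NormedSpace ℝ E]
    (a : ℝ) {w : ℝ} (hw : 0 < w) (z : E) :
    (w ^ a)⁻¹ • (w ^ (a - 1) • z) = w⁻¹ • z := by
  rw [smul_smul, ← Real.rpow_neg_one w, ← Real.rpow_neg hw.le, ← Real.rpow_add hw]
  congr 1
  ring

/-- Equivalence of the differential inequalities for different embedding degrees.  Let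
`S_j (z, w) = (w^(ξ_j+1) • Z (w⁻¹ • z), 0)` (`j = 1, 2`, `ξ₁, ξ₂ > 0`) be the two
homogenizations of `Z` and `Γ̃ (z, w) = Γ (w⁻¹ • z)` the homogenized triggering
function.  Given `Ω₁ ⊆ ℝ^(2n) × (0, ∞)` and
`Ω₂ = {(z, w) : w > 0 ∧ (w^(ξ₂/ξ₁ - 1) • z, w^(ξ₂/ξ₁)) ∈ Ω₁}`, the inequality
`L_{S₁}^p Γ̃ ≤ Σ_i χ_i L_{S₁}^i Γ̃` holds on `Ω₁` iff
`L_{S₂}^p Γ̃ ≤ Σ_i χ_i L_{S₂}^i Γ̃` holds on `Ω₂`. -/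
theorem embedding_degree_inequality_equiv {n : ℕ}
    (Z : (Fin (2 * n) → ℝ) → (Fin (2 * n) → ℝ)) (Γ : (Fin (2 * n) → ℝ) → ℝ)
    (hZ : ContDiff ℝ (⊤ : ℕ∞) Z) (hΓ : ContDiff ℝ (⊤ : ℕ∞) Γ)
    (ξ₁ ξ₂ : ℝ) (hξ₁ : 0 < ξ₁) (hξ₂ : 0 < ξ₂)
    (S₁ S₂ : (Fin (2 * n) → ℝ) × ℝ → (Fin (2 * n) → ℝ) × ℝ)
    (hS₁ : ∀ (z : Fin (2 * n) → ℝ) (w : ℝ),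
      S₁ (z, w) = (w ^ (ξ₁ + 1) • Z (w⁻¹ • z), (0 : ℝ)))
    (hS₂ : ∀ (z : Fin (2 * n) → ℝ) (w : ℝ),
      S₂ (z, w) = (w ^ (ξ₂ + 1) • Z (w⁻¹ • z), (0 : ℝ)))
    (Γt : (Fin (2 * n) → ℝ) × ℝ → ℝ)
    (hΓt : ∀ (z : Fin (2 * n) → ℝ) (w : ℝ), Γt (z, w) = Γ (w⁻¹ • z))
    (p : ℕ) (hp : 1 ≤ p) (χ : Fin p → ℝ)
    (Ω₁ : Set ((Fin (2 * n) → ℝ) × ℝ)) (hΩ₁ : ∀ q ∈ Ω₁, 0 < q.2) :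
    (∀ q ∈ Ω₁, lieDerivIter S₁ Γt p q ≤ ∑ i : Fin p, χ i * lieDerivIter S₁ Γt i q) ↔
    (∀ q ∈ {q : (Fin (2 * n) → ℝ) × ℝ | 0 < q.2 ∧
        (q.2 ^ (ξ₂ / ξ₁ - 1) • q.1, q.2 ^ (ξ₂ / ξ₁)) ∈ Ω₁},
      lieDerivIter S₂ Γt p q ≤ ∑ i : Fin p, χ i * lieDerivIter S₂ Γt i q) := by
  have key₁ := lieDerivIter_homog hZ hΓ ξ₁ hS₁ hΓt
  have key₂ := lieDerivIter_homog hZ hΓ ξ₂ hS₂ hΓt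
  have hξ₁' : ξ₁ ≠ 0 := ne_of_gt hξ₁
  have hξ₂' : ξ₂ ≠ 0 := ne_of_gt hξ₂
  constructor
  · rintro h ⟨z, w⟩ ⟨hw, hmem⟩
    simp only at hw hmem ⊢
    set c : ℝ := ξ₂ / ξ₁ with hc
    have hw' : 0 < w ^ c := Real.rpow_pos_of_pos hw c
    have h1 := h _ hmem
    have hz' : (w ^ c)⁻¹ • (w ^ (c - 1) • z) = w⁻¹ • z := smul_rpow_inv_eq c hw z
    have e1 : ∀ k : ℕ, lieDerivIter S₁ Γt k (w ^ (c - 1) • z, w ^ c)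
        = w ^ ((k : ℝ) * ξ₂) * lieDerivIter Z Γ k (w⁻¹ • z) := by
      intro k
      rw [key₁ k _ _ hw', hz', ← Real.rpow_mul hw.le]
      rw [hc]
      congr 2
      field_simp
    have e2 : ∀ k : ℕ, lieDerivIter S₂ Γt k (z, w)
        = w ^ ((k : ℝ) * ξ₂) * lieDerivIter Z Γ k (w⁻¹ • z) := fun k => key₂ k z w hw
    simp only [e1] at h1
    simp only [e2]
    exact h1
  · intro h ⟨z, w⟩ hq
    have hw : 0 < w := hΩ₁ _ hq
    set d : ℝ := ξ₁ / ξ₂ with hd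
    set c : ℝ := ξ₂ / ξ₁ with hc
    have hwd : 0 < w ^ d := Real.rpow_pos_of_pos hw d
    have ea : (w ^ d) ^ c = w := by
      rw [← Real.rpow_mul hw.le, show d * c = 1 by rw [hc, hd]; field_simp, Real.rpow_one]
    have eb : (w ^ d) ^ (c - 1) • (w ^ (d - 1) • z) = z := by
      rw [smul_smul, ← Real.rpow_mul hw.le, ← Real.rpow_add hw,
        show d * (c - 1) + (d - 1) = 0 by rw [hc, hd]; field_simp; ring, Real.rpow_zero, one_smul]
    have hmem : (w ^ (d - 1) • z, w ^ d) ∈ {q : (Fin (2 * n) → ℝ) × ℝ | 0 < q.2 ∧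
        (q.2 ^ (ξ₂ / ξ₁ - 1) • q.1, q.2 ^ (ξ₂ / ξ₁)) ∈ Ω₁} := by
      refine ⟨hwd, ?_⟩
      show ((w ^ d) ^ (ξ₂ / ξ₁ - 1) • (w ^ (d - 1) • z), (w ^ d) ^ (ξ₂ / ξ₁)) ∈ Ω₁
      rw [show ξ₂ / ξ₁ = c from rfl, eb, ea]
      exact hq
    have h1 := h _ hmem
    have hz' : (w ^ d)⁻¹ • (w ^ (d - 1) • z) = w⁻¹ • z := smul_rpow_inv_eq d hw z
    have e2 : ∀ k : ℕ, lieDerivIter S₂ Γt k (w ^ (d - 1) • z, w ^ d)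
        = w ^ ((k : ℝ) * ξ₁) * lieDerivIter Z Γ k (w⁻¹ • z) := by
      intro k
      rw [key₂ k _ _ hwd, hz', ← Real.rpow_mul hw.le]
      rw [hd]
      congr 2
      field_simp
    have e1 : ∀ k : ℕ, lieDerivIter S₁ Γt k (z, w)
        = w ^ ((k : ℝ) * ξ₁) * lieDerivIter Z Γ k (w⁻¹ • z) := fun k => key₁ k z w hw
    simp only [e2] at h1
    simp only [e1]
    exact h1
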